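/- Let G be a locally compact Hausdorff topological group and N a closed normal subgroup of G such that both N and the quotient group G/N are compactly presented. Then G is compactly presented. -/

import Mathlib

open scoped Pointwise

/-- A group `G` is *boundedly presented* by a subset `S ⊆ G` if there are an integer `n` and a
set `R` of words of length at most `n` in the letters `S ∪ S⁻¹`, each representing the identity
in `G`, such that the canonical homomorphism from the quotient of the free group on `S` by the
normal closure of `R` onto `G` is an isomorphism. -/
def BoundedlyPresentedBy (G : Type*) [Group G] (S : Set G) : Prop :=
  ∃ (n : ℕ) (R : Set (FreeGroup S)),
    (∀ r ∈ R, ∃ w : List (S × Bool), FreeGroup.mk w = r ∧ w.length ≤ n) ∧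
    Function.Surjective (FreeGroup.lift (fun s : S => (s : G))) ∧
    MonoidHom.ker (FreeGroup.lift (fun s : S => (s : G))) = Subgroup.normalClosure R

/-- A topological group is *compactly presented* if it is boundedly presented by some compact
subset. -/
def CompactlyPresented (G : Type*) [Group G] [TopologicalSpace G] : Prop :=
  ∃ S : Set G, IsCompact S ∧ BoundedlyPresentedBy G S

/-!
Let `T` be a compact generating set of `N` and `S ⊆ G` a compact lift of a compact generating set
of `G ⧸ N`. Since `N` is closed it is locally compact, and by Baire's theorem each compact subset
of `N`, in particular the trace on `N` of a word ball of `S ∪ T`, lies in a `T`-word ball. Hence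
for large `n` the relations of length `≤ n` over `S ∪ T` include the relators of `N`, the relators
of `G ⧸ N` (lifted, and corrected by a `T`-word), relations writing each letter of `S` as the
chosen lift of its image times a `T`-word, and relations rewriting each conjugate of a `T`-letter
by a letter as a `T`-word. Modulo these the `T`-words form a normal subgroup `H` which, together
with the lifted letters of `G ⧸ N`, generates; a relation of `G` lies in `H` because its image is
a relation of `G ⧸ N`, and then in the relation subgroup because `N` is presented by `T`.
-/

theorem Set.list_prod_mem_pow {M : Type*} [Monoid M] {s : Set M} :
    ∀ {l : List M}, (∀ x ∈ l, x ∈ s) → l.prod ∈ s ^ l.length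
  | [], _ => by simp
  | x :: l, h => by
    rw [List.prod_cons, List.length_cons, pow_succ']
    exact Set.mul_mem_mul (h x List.mem_cons_self) (list_prod_mem_pow fun y hy ↦ h y (.tail x hy))

theorem IsCompact.pow {M : Type*} [Monoid M] [TopologicalSpace M] [ContinuousMul M] {s : Set M}
    (hs : IsCompact s) : ∀ n : ℕ, IsCompact (s ^ n)
  | 0 => by simp
  | n + 1 => by rw [pow_succ]; exact (hs.pow n).mul hs

theorem FreeGroup.norm_map_le {α β : Type*} [DecidableEq α] [DecidableEq β] (f : α → β)
    (x : FreeGroup α) : (map f x).norm ≤ x.norm := by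
  conv_lhs => rw [← mk_toWord (x := x), map.mk]
  exact norm_mk_le.trans (List.length_map _).le

theorem FreeGroup.normal_sup_range {α β : Type*} {K : Subgroup (FreeGroup α)} [K.Normal]
    {θ : FreeGroup β →* FreeGroup α}
    (h : ∀ a b, of a * θ (of b) * (of a)⁻¹ ∈ K ⊔ θ.range ∧
      (of a)⁻¹ * θ (of b) * of a ∈ K ⊔ θ.range) :
    (K ⊔ θ.range).Normal := by
  set H := K ⊔ θ.range
  have conj_mem (g : FreeGroup α) (hg : ∀ b, g * θ (of b) * g⁻¹ ∈ H) :
      H ≤ H.comap (MulAut.conj g).toMonoidHom := by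
    refine sup_le (fun k hk ↦ Subgroup.mem_sup_left (‹K.Normal›.conj_mem k hk g)) ?_
    rw [MonoidHom.range_eq_map, Subgroup.map_le_iff_le_comap, ← closure_range_of,
      Subgroup.closure_le]
    rintro _ ⟨b, rfl⟩
    exact hg b
  rw [← Subgroup.normalizer_eq_top_iff, eq_top_iff, ← closure_range_of, Subgroup.closure_le]
  rintro _ ⟨a, rfl⟩
  refine Subgroup.mem_normalizer_iff.2 fun x ↦ ⟨fun hx ↦ conj_mem _ (fun b ↦ (h a b).1) hx,
    fun hx ↦ ?_⟩
  simpa [mul_assoc] using conj_mem (of a)⁻¹ (by simpa using fun b ↦ (h a b).2) hx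

theorem IsOpenQuotientMap.exists_isCompact_image_eq {X Y : Type*} [TopologicalSpace X]
    [TopologicalSpace Y] [WeaklyLocallyCompactSpace X] [T2Space Y] {f : X → Y}
    (hf : IsOpenQuotientMap f) {K : Set Y} (hK : IsCompact K) :
    ∃ C, IsCompact C ∧ f '' C = K := by
  choose U hUc hUx using fun x : X ↦ exists_compact_mem_nhds x
  obtain ⟨t, ht⟩ := hK.elim_finite_subcover (fun x ↦ f '' interior (U x))
    (fun x ↦ hf.isOpenMap _ isOpen_interior) fun y _ ↦ by
      obtain ⟨x, rfl⟩ := hf.surjective y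
      exact Set.mem_iUnion.2 ⟨x, x, mem_interior_iff_mem_nhds.2 (hUx x), rfl⟩
  refine ⟨(⋃ x ∈ t, U x) ∩ f ⁻¹' K, (t.finite_toSet.isCompact_biUnion fun x _ ↦ hUc x).inter_right
    (hK.isClosed.preimage hf.continuous), subset_antisymm
    (Set.image_subset_iff.2 Set.inter_subset_right) fun y hy ↦ ?_⟩
  obtain ⟨x, hxt, z, hz, rfl⟩ := Set.mem_iUnion₂.1 (ht hy)
  exact ⟨z, ⟨Set.mem_biUnion hxt (interior_subset hz), hy⟩, rfl⟩

section WordBall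

variable {H : Type*} [Group H]

def wordBall (S : Set H) (n : ℕ) : Set H :=
  {x | ∃ w : List (S × Bool), w.length ≤ n ∧ FreeGroup.lift ((↑) : S → H) (FreeGroup.mk w) = x}

theorem mem_wordBall_iff [DecidableEq H] {S : Set H} {n : ℕ} {x : H} :
    x ∈ wordBall S n ↔ ∃ w : FreeGroup S, w.norm ≤ n ∧ FreeGroup.lift ((↑) : S → H) w = x :=
  ⟨fun ⟨l, hl, hx⟩ ↦ ⟨.mk l, FreeGroup.norm_mk_le.trans hl, hx⟩,
    fun ⟨w, hw, hx⟩ ↦ ⟨w.toWord, hw, by rw [FreeGroup.mk_toWord, hx]⟩⟩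

theorem wordBall_mono (S : Set H) {m n : ℕ} (h : m ≤ n) : wordBall S m ⊆ wordBall S n :=
  fun _ ⟨w, hw, hx⟩ ↦ ⟨w, hw.trans h, hx⟩

theorem wordBall_mul_subset (S : Set H) (m n : ℕ) :
    wordBall S m * wordBall S n ⊆ wordBall S (m + n) := by
  rintro _ ⟨_, ⟨v, hv, rfl⟩, _, ⟨w, hw, rfl⟩, rfl⟩
  refine ⟨v ++ w, ?_, by rw [← FreeGroup.mul_mk, map_mul]⟩
  rw [List.length_append]
  omega

theorem iUnion_wordBall (S : Set H) : ⋃ n, wordBall S n = Subgroup.closure S := by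
  classical
  ext x
  simp only [Set.mem_iUnion, mem_wordBall_iff, FreeGroup.closure_eq_range, SetLike.mem_coe,
    MonoidHom.mem_range]
  exact ⟨fun ⟨_, w, _, hw⟩ ↦ ⟨w, hw⟩, fun ⟨w, hw⟩ ↦ ⟨w.norm, w, le_rfl, hw⟩⟩

theorem wordBall_eq_pow (S : Set H) (n : ℕ) : wordBall S n = (S ∪ S⁻¹ ∪ {1}) ^ n := by
  apply subset_antisymm
  · rintro _ ⟨w, hw, rfl⟩
    refine Set.pow_subset_pow_right (by simp) hw ?_
    have hletters : ∀ x ∈ w.map (fun x ↦ cond x.2 (x.1 : H) (x.1 : H)⁻¹),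
        x ∈ S ∪ S⁻¹ ∪ {1} := by
      simp only [List.mem_map]
      rintro _ ⟨⟨s, _ | _⟩, _, rfl⟩ <;> simp [s.2]
    simpa [FreeGroup.lift_mk] using Set.list_prod_mem_pow hletters
  · have letter : S ∪ S⁻¹ ∪ {1} ⊆ wordBall S 1 := by
      rintro s ((hs | hs) | rfl)
      · exact ⟨[(⟨s, hs⟩, true)], le_rfl, by simp [FreeGroup.lift_mk]⟩
      · exact ⟨[(⟨s⁻¹, hs⟩, false)], le_rfl, by simp [FreeGroup.lift_mk]⟩
      · exact ⟨[], zero_le_one, by simp [FreeGroup.lift_mk]⟩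
    induction n with
    | zero =>
      rw [pow_zero, Set.one_subset]
      exact ⟨[], le_rfl, by simp [FreeGroup.lift_mk]⟩
    | succ n ih =>
      rw [pow_succ]
      exact (Set.mul_subset_mul ih letter).trans (wordBall_mul_subset S n 1)

theorem isCompact_wordBall [TopologicalSpace H] [IsTopologicalGroup H] {S : Set H}
    (hS : IsCompact S) (n : ℕ) : IsCompact (wordBall S n) := by
  rw [wordBall_eq_pow]
  exact ((hS.union hS.inv).union isCompact_singleton).pow n

theorem IsCompact.exists_subset_wordBall [TopologicalSpace H] [IsTopologicalGroup H]
    [LocallyCompactSpace H] [T2Space H] {C S : Set H} (hC : IsCompact C) (hS : IsCompact S)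
    (hgen : Subgroup.closure S = ⊤) : ∃ n, C ⊆ wordBall S n := by
  have hcover : ⋃ n, wordBall S n = Set.univ := by rw [iUnion_wordBall, hgen, Subgroup.coe_top]
  obtain ⟨i, x, hx⟩ :=
    nonempty_interior_of_iUnion_of_closed (fun n ↦ (isCompact_wordBall hS n).isClosed) hcover
  -- the translates `wordBall S k * interior (wordBall S i)` form an increasing open cover of `H`
  obtain ⟨k, hk⟩ := hC.elim_directed_cover (fun k ↦ wordBall S k * interior (wordBall S i))
    (fun _ ↦ isOpen_interior.mul_left)
    (fun g _ ↦ by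
      obtain ⟨k, hk⟩ := Set.mem_iUnion.1 (hcover.symm ▸ Set.mem_univ (g * x⁻¹))
      exact Set.mem_iUnion.2 ⟨k, g * x⁻¹, hk, x, hx, inv_mul_cancel_right g x⟩)
    (Monotone.directed_le fun _ _ hkl ↦ Set.mul_subset_mul_right (wordBall_mono S hkl))
  exact ⟨k + i, hk.trans ((Set.mul_subset_mul_left interior_subset).trans
    (wordBall_mul_subset S k i))⟩

end WordBall

theorem exists_inter_subset_image_wordBall {G : Type*} [Group G] [TopologicalSpace G]
    [IsTopologicalGroup G] [T2Space G] [LocallyCompactSpace G] {N : Subgroup G}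
    (hN : IsClosed (N : Set G)) {T : Set N} (hT : IsCompact T) (hgen : Subgroup.closure T = ⊤)
    {C : Set G} (hC : IsCompact C) : ∃ L, C ∩ N ⊆ (↑) '' wordBall T L := by
  have hemb : Topology.IsClosedEmbedding ((↑) : N → G) := hN.isClosedEmbedding_subtypeVal
  have := hemb.locallyCompactSpace
  obtain ⟨L, hL⟩ := (hemb.isCompact_preimage hC).exists_subset_wordBall hT hgen
  exact ⟨L, fun g ⟨hgC, hgN⟩ ↦ ⟨⟨g, hgN⟩, hL hgC, rfl⟩⟩

def shortRelators {G : Type*} [Group G] (S : Set G) (n : ℕ) : Set (FreeGroup S) :=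
  {r | FreeGroup.lift ((↑) : S → G) r = 1 ∧
    ∃ w : List (S × Bool), FreeGroup.mk w = r ∧ w.length ≤ n}

theorem boundedlyPresentedBy_iff_ker_le {G : Type*} [Group G] {S : Set G} :
    BoundedlyPresentedBy G S ↔ Function.Surjective (FreeGroup.lift ((↑) : S → G)) ∧
      ∃ n, (FreeGroup.lift ((↑) : S → G)).ker ≤ Subgroup.normalClosure (shortRelators S n) := by
  constructor
  · rintro ⟨n, R, hR, hsurj, hker⟩
    refine ⟨hsurj, n, hker ▸ Subgroup.normalClosure_mono fun r hr ↦ ⟨?_, hR r hr⟩⟩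
    exact (hker ▸ Subgroup.subset_normalClosure hr : r ∈ (FreeGroup.lift ((↑) : S → G)).ker)
  · rintro ⟨hsurj, n, hker⟩
    exact ⟨n, shortRelators S n, fun r hr ↦ hr.2, hsurj,
      le_antisymm hker (Subgroup.normalClosure_le_normal fun r hr ↦ hr.1)⟩

theorem BoundedlyPresentedBy.closure_eq_top {G : Type*} [Group G] {S : Set G}
    (h : BoundedlyPresentedBy G S) : Subgroup.closure S = ⊤ := by
  obtain ⟨-, -, -, hsurj, -⟩ := h
  rwa [FreeGroup.lift_surjective_iff_closure_range_eq_top, Subtype.range_coe] at hsurj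

theorem ker_le_of_extension {F G A B : Type*} [Group F] [Group G] [Group A] [Group B]
    {φ : F →* G} {N : Subgroup G} {θ : A →* F} {ψ : B →* F} {K : Subgroup F} [K.Normal]
    (hH : (K ⊔ θ.range).Normal) (hK : K ≤ φ.ker) (hθN : ∀ y, φ (θ y) ∈ N)
    (hθK : ∀ y, φ (θ y) = 1 → θ y ∈ K) (hψ : ∀ x, φ (ψ x) ∈ N → ψ x ∈ K ⊔ θ.range)
    (htop : ψ.range ⊔ (K ⊔ θ.range) = ⊤) : φ.ker ≤ K := by
  intro w hw
  have hHN : K ⊔ θ.range ≤ N.comap φ :=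
    sup_le (hK.trans (MonoidHom.ker_le_comap φ N)) (by rintro _ ⟨y, rfl⟩; exact hθN y)
  obtain ⟨_, ⟨x, rfl⟩, h, hh, rfl⟩ : w ∈ (ψ.range : Set F) * (K ⊔ θ.range : Subgroup F) := by
    rw [← Subgroup.mul_normal, htop]
    trivial
  beta_reduce at hw ⊢
  have hφψ : φ (ψ x) ∈ N := by
    rw [← mul_inv_cancel_right (ψ x) h, map_mul, hw, one_mul, map_inv]
    exact N.inv_mem (hHN hh)
  obtain ⟨k, hk, _, ⟨y, rfl⟩, hky⟩ : ψ x * h ∈ (K : Set F) * θ.range := by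
    rw [← Subgroup.normal_mul]
    exact mul_mem (hψ x hφψ) hh
  rw [← hky] at hw ⊢
  refine mul_mem hk (hθK y ?_)
  rwa [MonoidHom.mem_ker, map_mul, hK hk, one_mul] at hw


section Extension

open scoped Classical

variable {G : Type*} [Group G] {N : Subgroup G} {S : Set G} {T : Set N}

theorem closure_union_image_eq_top [N.Normal] (hT : Subgroup.closure T = ⊤)
    (hS : Subgroup.closure (((↑) : G → G ⧸ N) '' S) = ⊤) :
    Subgroup.closure (S ∪ (↑) '' T) = ⊤ := by
  have hN : N ≤ Subgroup.closure (S ∪ (↑) '' T) := by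
    have hT' := congrArg (Subgroup.map N.subtype) hT
    rw [MonoidHom.map_closure, ← MonoidHom.range_eq_map, Subgroup.range_subtype,
      Subgroup.coe_subtype] at hT'
    exact hT'.symm.le.trans (Subgroup.closure_mono Set.subset_union_right)
  have hmap : (Subgroup.closure (S ∪ (↑) '' T)).map (QuotientGroup.mk' N) = ⊤ :=
    eq_top_mono (Subgroup.map_mono (Subgroup.closure_mono Set.subset_union_left))
      (by rw [MonoidHom.map_closure]; exact hS)
  rw [eq_top_iff, ← Subgroup.comap_top (QuotientGroup.mk' N), ← hmap, Subgroup.comap_map_eq,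
    QuotientGroup.ker_mk', sup_eq_left.2 hN]

variable (S T) in
def normalLetter (t : T) : ↥(S ∪ (↑) '' T) :=
  ⟨t, .inr ⟨t, t.2, rfl⟩⟩

variable (S T) in
noncomputable def quotientLetter (b : ↥(((↑) : G → G ⧸ N) '' S)) : ↥(S ∪ (↑) '' T) :=
  ⟨b.2.choose, .inl b.2.choose_spec.1⟩

theorem coe_quotientLetter (b : ↥(((↑) : G → G ⧸ N) '' S)) :
    ((quotientLetter S T b : G) : G ⧸ N) = b :=
  b.2.choose_spec.2

theorem lift_map_normalLetter (y : FreeGroup T) :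
    FreeGroup.lift (↑) (FreeGroup.map (normalLetter S T) y) =
      ((FreeGroup.lift ((↑) : T → N) y : N) : G) := by
  have : (FreeGroup.lift (↑)).comp (FreeGroup.map (normalLetter S T)) =
      N.subtype.comp (FreeGroup.lift (↑)) :=
    FreeGroup.ext_hom _ _ fun t ↦ by simp [normalLetter]
  exact DFunLike.congr_fun this y

theorem mk_lift_map_quotientLetter [N.Normal] (x : FreeGroup ↥(((↑) : G → G ⧸ N) '' S)) :
    ((FreeGroup.lift (↑) (FreeGroup.map (quotientLetter S T) x) : G) : G ⧸ N) =
      FreeGroup.lift (↑) x := by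
  have : (QuotientGroup.mk' N).comp
      ((FreeGroup.lift (↑)).comp (FreeGroup.map (quotientLetter S T))) = FreeGroup.lift (↑) :=
    FreeGroup.ext_hom _ _ fun b ↦ by simp [coe_quotientLetter]
  exact DFunLike.congr_fun this x

theorem mem_sup_range_of_norm_le {m L n : ℕ}
    (hL : wordBall (S ∪ (↑) '' T) m ∩ N ⊆ (↑) '' wordBall T L) (hn : m + L ≤ n)
    {w : FreeGroup ↥(S ∪ (↑) '' T)} (hw : w.norm ≤ m) (hwN : FreeGroup.lift (↑) w ∈ N) :
    w ∈ Subgroup.normalClosure (shortRelators _ n) ⊔ (FreeGroup.map (normalLetter S T)).range := by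
  obtain ⟨_, hy, hyw⟩ := hL ⟨mem_wordBall_iff.2 ⟨w, hw, rfl⟩, hwN⟩
  obtain ⟨y, hyL, rfl⟩ := mem_wordBall_iff.1 hy
  set θ := FreeGroup.map (normalLetter S T)
  have hrel : w * (θ y)⁻¹ ∈ shortRelators _ n := by
    refine ⟨by rw [map_mul, map_inv, lift_map_normalLetter, hyw, mul_inv_cancel],
      _, FreeGroup.mk_toWord, ?_⟩
    have h₁ := FreeGroup.norm_mul_le w (θ y)⁻¹
    have h₂ : (θ y).norm ≤ y.norm := FreeGroup.norm_map_le _ y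
    rw [FreeGroup.norm_inv_eq] at h₁
    change (w * (θ y)⁻¹).norm ≤ n
    omega
  rw [← inv_mul_cancel_right w (θ y)]
  exact mul_mem (Subgroup.mem_sup_left (Subgroup.subset_normalClosure hrel))
    (Subgroup.mem_sup_right ⟨y, rfl⟩)

theorem normal_sup_range_normalLetter [N.Normal] {K : Subgroup (FreeGroup ↥(S ∪ (↑) '' T))}
    [K.Normal] (hK : ∀ w, w.norm ≤ 3 → FreeGroup.lift (↑) w ∈ N →
      w ∈ K ⊔ (FreeGroup.map (normalLetter S T)).range) :
    (K ⊔ (FreeGroup.map (normalLetter S T)).range).Normal := by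
  have norm_conj (g : FreeGroup ↥(S ∪ (↑) '' T)) (hg : g.norm ≤ 1) (t : T) :
      (g * FreeGroup.map (normalLetter S T) (.of t) * g⁻¹).norm ≤ 3 := by
    have h₁ := FreeGroup.norm_mul_le (g * FreeGroup.map (normalLetter S T) (.of t)) g⁻¹
    have h₂ := FreeGroup.norm_mul_le g (FreeGroup.map (normalLetter S T) (.of t))
    simp only [FreeGroup.map.of, FreeGroup.norm_of, FreeGroup.norm_inv_eq] at h₁ h₂ ⊢
    omega
  refine FreeGroup.normal_sup_range fun a t ↦
    ⟨hK _ (norm_conj _ (FreeGroup.norm_of a).le t) ?_,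
      hK _ (norm_conj _ (by rw [FreeGroup.norm_inv_eq, FreeGroup.norm_of]) t) ?_⟩
  · simpa [normalLetter] using ‹N.Normal›.conj_mem _ (t : N).2 (a : G)
  · simpa [normalLetter] using ‹N.Normal›.conj_mem _ (t : N).2 (a : G)⁻¹

theorem sup_range_quotientLetter_eq_top [N.Normal] {K : Subgroup (FreeGroup ↥(S ∪ (↑) '' T))}
    [K.Normal] (hK : ∀ w, w.norm ≤ 2 → FreeGroup.lift (↑) w ∈ N →
      w ∈ K ⊔ (FreeGroup.map (normalLetter S T)).range) :
    (FreeGroup.map (quotientLetter S T)).range ⊔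
      (K ⊔ (FreeGroup.map (normalLetter S T)).range) = ⊤ := by
  rw [eq_top_iff, ← FreeGroup.closure_range_of, Subgroup.closure_le]
  rintro _ ⟨x, rfl⟩
  rcases x.2 with hx | ⟨t, ht, hx⟩
  · set b : ↥(((↑) : G → G ⧸ N) '' S) := ⟨x, x, hx, rfl⟩
    set ψ := FreeGroup.map (quotientLetter S T)
    have hb : (FreeGroup.of x)⁻¹ * ψ (.of b) ∈ K ⊔ (FreeGroup.map (normalLetter S T)).range := by
      refine hK _ ?_ ?_
      · have := FreeGroup.norm_mul_le (FreeGroup.of x)⁻¹ (ψ (.of b))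
        simp only [FreeGroup.norm_inv_eq, FreeGroup.norm_of, ψ, FreeGroup.map.of] at this ⊢
        omega
      · simpa [ψ] using QuotientGroup.eq.1 (coe_quotientLetter (T := T) b).symm
    rw [show FreeGroup.of x = ψ (.of b) * ((FreeGroup.of x)⁻¹ * ψ (.of b))⁻¹ by group]
    exact mul_mem (Subgroup.mem_sup_left ⟨.of b, rfl⟩) (Subgroup.mem_sup_right (inv_mem hb))
  · refine Subgroup.mem_sup_right (Subgroup.mem_sup_right ⟨.of ⟨t, ht⟩, ?_⟩)
    exact congrArg FreeGroup.of (Subtype.ext hx)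

theorem map_normalLetter_mem_normalClosure {nT n : ℕ}
    (hT : (FreeGroup.lift ((↑) : T → N)).ker ≤ Subgroup.normalClosure (shortRelators T nT))
    (hn : nT ≤ n) {y : FreeGroup T}
    (hy : FreeGroup.lift (↑) (FreeGroup.map (normalLetter S T) y) = (1 : G)) :
    FreeGroup.map (normalLetter S T) y ∈ Subgroup.normalClosure (shortRelators _ n) := by
  rw [lift_map_normalLetter, OneMemClass.coe_eq_one] at hy
  refine Subgroup.normalClosure_le_normal
    (N := (Subgroup.normalClosure (shortRelators _ n)).comap (FreeGroup.map (normalLetter S T)))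
    (fun r hr ↦ ?_) (hT hy)
  obtain ⟨hr, w, rfl, hlen⟩ := hr
  refine Subgroup.subset_normalClosure ⟨?_, _, FreeGroup.map.mk.symm, ?_⟩
  · rw [lift_map_normalLetter, hr, OneMemClass.coe_one]
  · rw [List.length_map]
    omega

theorem map_quotientLetter_mem [N.Normal] {H : Subgroup (FreeGroup ↥(S ∪ (↑) '' T))} [H.Normal]
    {nS : ℕ} (hS : (FreeGroup.lift ((↑) : _ → G ⧸ N)).ker ≤
      Subgroup.normalClosure (shortRelators (((↑) : G → G ⧸ N) '' S) nS))
    (hH : ∀ w, w.norm ≤ nS → FreeGroup.lift (↑) w ∈ N → w ∈ H)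
    {x : FreeGroup ↥(((↑) : G → G ⧸ N) '' S)}
    (hx : FreeGroup.lift (↑) (FreeGroup.map (quotientLetter S T) x) ∈ N) :
    FreeGroup.map (quotientLetter S T) x ∈ H := by
  have hx : FreeGroup.lift ((↑) : _ → G ⧸ N) x = 1 := by
    rw [← mk_lift_map_quotientLetter]
    exact (QuotientGroup.eq_one_iff _).2 hx
  refine Subgroup.normalClosure_le_normal (N := H.comap (FreeGroup.map (quotientLetter S T)))
    (fun r hr ↦ ?_) (hS hx)
  obtain ⟨hr, w, rfl, hlen⟩ := hr
  refine hH _ ((FreeGroup.norm_map_le _ _).trans (FreeGroup.norm_mk_le.trans hlen)) ?_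
  rw [← QuotientGroup.eq_one_iff, mk_lift_map_quotientLetter, hr]

theorem boundedlyPresentedBy_union_of_extension [N.Normal] (hT : BoundedlyPresentedBy N T)
    (hS : BoundedlyPresentedBy (G ⧸ N) ((↑) '' S))
    (hbound : ∀ m, ∃ L, wordBall (S ∪ (↑) '' T) m ∩ N ⊆ (↑) '' wordBall T L) :
    BoundedlyPresentedBy G (S ∪ (↑) '' T) := by
  have hgen := closure_union_image_eq_top hT.closure_eq_top hS.closure_eq_top
  rw [boundedlyPresentedBy_iff_ker_le] at hT hS ⊢
  obtain ⟨-, nT, hT_ker⟩ := hT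
  obtain ⟨-, nS, hS_ker⟩ := hS
  obtain ⟨L, hL⟩ := hbound (nS + 3)
  set n := nT + (nS + 3 + L)
  have key {m : ℕ} (hm : m ≤ nS + 3) (w : FreeGroup ↥(S ∪ (↑) '' T)) (hw : w.norm ≤ m)
      (hwN : FreeGroup.lift (↑) w ∈ N) :
      w ∈ Subgroup.normalClosure (shortRelators _ n) ⊔ (FreeGroup.map (normalLetter S T)).range :=
    mem_sup_range_of_norm_le hL (by omega) (hw.trans hm) hwN
  have hH := normal_sup_range_normalLetter (key (by omega))
  refine ⟨by rwa [FreeGroup.lift_surjective_iff_closure_range_eq_top, Subtype.range_coe], n,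
    ker_le_of_extension hH (Subgroup.normalClosure_le_normal fun r hr ↦ hr.1)
      (fun y ↦ lift_map_normalLetter y ▸ (FreeGroup.lift ((↑) : T → N) y).2)
      (fun _ ↦ map_normalLetter_mem_normalClosure hT_ker (by omega))
      (fun _ ↦ map_quotientLetter_mem hS_ker (key (by omega)))
      (sup_range_quotientLetter_eq_top (key (by omega)))⟩

end Extension

/-- an extension of compactly presented locally compact groups is compactly
presented. -/
theorem compactlyPresented_of_extension {G : Type*} [Group G] [TopologicalSpace G]
    [IsTopologicalGroup G] [T2Space G] [LocallyCompactSpace G]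
    (N : Subgroup G) [N.Normal] (hclosed : IsClosed (N : Set G))
    (hN : CompactlyPresented N) (hQ : CompactlyPresented (G ⧸ N)) :
    CompactlyPresented G := by
  obtain ⟨T, hTc, hT⟩ := hN
  obtain ⟨Sbar, hSbarc, hS⟩ := hQ
  have : IsClosed (N : Set G) := hclosed
  obtain ⟨S, hSc, rfl⟩ := QuotientGroup.isOpenQuotientMap_mk.exists_isCompact_image_eq hSbarc
  have hXc : IsCompact (S ∪ (↑) '' T) := hSc.union (hTc.image continuous_subtype_val)
  exact ⟨_, hXc, boundedlyPresentedBy_union_of_extension hT hS fun m ↦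
    exists_inter_subset_image_wordBall hclosed hTc hT.closure_eq_top (isCompact_wordBall hXc m)⟩
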